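/- arXiv:1904.00426 — 6 statements merged into one kernel-verified Lean document; each statement's English description precedes it below -/
import Mathlib

section
/- Let m ≥ 1 be a natural number, let a be a real number with 0 ≤ a < 1, and set s = 2am/(1-a). Then a sequence Q : ℕ → ℝ satisfies the L-graph recursion Q_m = (2m+s)/(2m+s+m(m+s)) and Q_k = [m(k-1+s)/(2m+s+m(k+s))]·Q_{k-1} for all k ≥ m+1 if and only if it satisfies the Pennock-graph recursion Q_m = 2/(2+am+m) and Q_k = [(2am+(1-a)(k-1))/(2+2am+(1-a)k)]·Q_{k-1} for all k ≥ m+1. (Hence every hybrid Pennock graph with parameters (m,a) has the same final vertex degree distribution as the L-graph with parameters (m, s = 2am/(1-a)).) -/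
/-- For `m ≥ 1`, `0 ≤ a < 1`, `s = 2am/(1-a)`, a sequence `Q` satisfies
the L-graph VDD recursion iff it satisfies the Pennock-graph VDD recursion. -/
theorem pennock_L_vdd_equiv (m : ℕ) (hm : 1 ≤ m) (a : ℝ) (ha0 : 0 ≤ a) (ha1 : a < 1)
    (s : ℝ) (hs : s = 2 * a * m / (1 - a)) (Q : ℕ → ℝ) :
    (Q m = (2 * m + s) / (2 * m + s + m * (m + s)) ∧
      ∀ k : ℕ, m + 1 ≤ k →
        Q k = (m * ((k : ℝ) - 1 + s) / (2 * m + s + m * (k + s))) * Q (k - 1)) ↔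
    (Q m = 2 / (2 + a * m + m) ∧
      ∀ k : ℕ, m + 1 ≤ k →
        Q k = ((2 * a * m + (1 - a) * ((k : ℝ) - 1)) / (2 + 2 * a * m + (1 - a) * k)) *
          Q (k - 1)) := by
  have h1a : (0:ℝ) < 1 - a := by linarith
  have hmR : (1:ℝ) ≤ (m:ℝ) := by exact_mod_cast hm
  have hm0 : (0:ℝ) < (m:ℝ) := by linarith
  have hs0 : 0 ≤ s := by
    rw [hs]
    positivity
  have h1 : (2 * (m:ℝ) + s) / (2 * m + s + m * (m + s)) = 2 / (2 + a * m + m) := by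
    have hd1 : 2 * (m:ℝ) + s + m * (m + s) ≠ 0 := by nlinarith
    have hd2 : 2 + a * (m:ℝ) + m ≠ 0 := by nlinarith
    rw [div_eq_div_iff hd1 hd2] at *
    rw [hs]
    field_simp
    ring
  have h2 : ∀ k : ℕ, m + 1 ≤ k →
      (m:ℝ) * ((k : ℝ) - 1 + s) / (2 * m + s + m * (k + s)) =
      (2 * a * m + (1 - a) * ((k : ℝ) - 1)) / (2 + 2 * a * m + (1 - a) * k) := by
    intro k hk
    have hkR : (m:ℝ) + 1 ≤ (k:ℝ) := by exact_mod_cast hk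
    have hd1 : 2 * (m:ℝ) + s + m * ((k:ℝ) + s) ≠ 0 := by nlinarith
    have hd2 : 2 + 2 * a * (m:ℝ) + (1 - a) * (k:ℝ) ≠ 0 := by nlinarith
    rw [div_eq_div_iff hd1 hd2]
    rw [hs]
    field_simp
    ring
  constructor
  · rintro ⟨hQ, hrec⟩
    refine ⟨by rw [hQ, h1], fun k hk => by rw [hrec k hk, h2 k hk]⟩
  · rintro ⟨hQ, hrec⟩
    refine ⟨by rw [hQ, ← h1], fun k hk => by rw [hrec k hk, ← h2 k hk]⟩
end

section
/- Let m ≥ 1 be a natural number, let a be a real number with 0 ≤ a < 1, and set s = 2am/(1-a). Let N ≥ 1 be a natural number and let k₁, …, k_N be positive real numbers (vertex degrees) with Σ_{j=1}^N k_j = 2mN. Then for every index i, the Pennock attachment probability equals the L-graph attachment probability: a·(1/N) + (1-a)·k_i/(2mN) = (k_i + s)/(Σ_{j=1}^N (k_j + s)), and both are equal to (2am + k_i(1-a))/(2mN). (Hence the growth rules of the Pennock graph (m,a) and the L-graph (m, 2am/(1-a)) coincide, so every P-graph is equivalent to a certain L-graph.) -/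
/-!
Both attachment probabilities are affine in the degree `kᵢ` over the common denominator `2mN`.
For the L-graph, the choice `s(1 - a) = 2am` makes multiplying numerator and denominator of
`(kᵢ + s)/(2mN + Ns)` by `1 - a` give `(2am + kᵢ(1 - a))/(2mN)`, the Pennock probability.
-/

theorem pennock_attachment_prob_eq {m : ℝ} (hm : m ≠ 0) (a k N : ℝ) :
    a * (1 / N) + (1 - a) * k / (2 * m * N) = (2 * a * m + k * (1 - a)) / (2 * m * N) := by
  have hmN : a * (1 / N) = 2 * a * m / (2 * m * N) := by
    rw [mul_one_div, ← mul_div_mul_left a N (mul_ne_zero two_ne_zero hm)]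
    ring
  rw [hmN, add_div, mul_comm (1 - a)]

theorem lgraph_attachment_prob_eq {a : ℝ} (ha : a ≠ 1) {m s : ℝ} (hs : s = 2 * a * m / (1 - a))
    (k N : ℝ) :
    (k + s) / (2 * m * N + N * s) = (2 * a * m + k * (1 - a)) / (2 * m * N) := by
  have h1a : 1 - a ≠ 0 := sub_ne_zero.mpr ha.symm
  have hs' : s * (1 - a) = 2 * a * m := by rw [hs, div_mul_cancel₀ _ h1a]
  calc (k + s) / (2 * m * N + N * s)
      = ((k + s) * (1 - a)) / ((2 * m * N + N * s) * (1 - a)) :=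
        (mul_div_mul_right _ _ h1a).symm
    _ = (2 * a * m + k * (1 - a)) / (2 * m * N) := by
        congr 1
        · linear_combination hs'
        · linear_combination N * hs'

theorem pennock_L_attachment_rule_equiv_general (m : ℕ) (hm : 1 ≤ m) (a : ℝ)
    (ha1 : a < 1) (s : ℝ) (hs : s = 2 * a * m / (1 - a)) (N : ℕ)
    (k : Fin N → ℝ) (hsum : ∑ j, k j = 2 * m * N) :
    ∀ i : Fin N,
      a * (1 / (N : ℝ)) + (1 - a) * k i / (2 * m * N) = (k i + s) / (∑ j, (k j + s)) ∧
      a * (1 / (N : ℝ)) + (1 - a) * k i / (2 * m * N) =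
        (2 * a * m + k i * (1 - a)) / (2 * m * N) := by
  intro i
  have hm0 : (m : ℝ) ≠ 0 := by positivity
  have hpennock := pennock_attachment_prob_eq hm0 a (k i) N
  have hdenom : ∑ j, (k j + s) = 2 * m * N + N * s := by
    rw [← Finset.sum_add_card_nsmul, hsum, Finset.card_univ, Fintype.card_fin, nsmul_eq_mul]
  refine ⟨?_, hpennock⟩
  rw [hpennock, hdenom, lgraph_attachment_prob_eq ha1.ne hs]

/-- With `s = 2am/(1-a)` and degrees summing to `2mN`, the Pennock
attachment probability equals the L-graph attachment probability, and both equal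
`(2am + kᵢ(1-a))/(2mN)`. -/
theorem pennock_L_attachment_rule_equiv (m : ℕ) (hm : 1 ≤ m) (a : ℝ) (ha0 : 0 ≤ a)
    (ha1 : a < 1) (s : ℝ) (hs : s = 2 * a * m / (1 - a)) (N : ℕ) (hN : 1 ≤ N)
    (k : Fin N → ℝ) (hk : ∀ j, 0 < k j) (hsum : ∑ j, k j = 2 * m * N) :
    ∀ i : Fin N,
      a * (1 / (N : ℝ)) + (1 - a) * k i / (2 * m * N) = (k i + s) / (∑ j, (k j + s)) ∧
      a * (1 / (N : ℝ)) + (1 - a) * k i / (2 * m * N) =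
        (2 * a * m + k i * (1 - a)) / (2 * m * N) :=
  pennock_L_attachment_rule_equiv_general m hm a ha1 s hs N k hsum
end

section
/- Let m ≥ 1 be a natural number and let s be a real number with s > -m. If Q : ℕ → ℝ satisfies Q_m = (2m+s)/(2m+s+m(m+s)) and Q_k = [m(k-1+s)/(2m+s+m(k+s))]·Q_{k-1} for all k ≥ m+1, then for all k ≥ m, Q_k = (2m+s)·Γ(m+s+2+s/m)·Γ(k+s) / (m·Γ(m+s)·Γ(k+s+3+s/m)), where Γ denotes the Gamma function. -/
/-- The L-graph VDD recursion has the closed-form Gamma-function solution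
`Q_k = (2m+s)·Γ(m+s+2+s/m)·Γ(k+s) / (m·Γ(m+s)·Γ(k+s+3+s/m))`. -/
theorem L_vdd_closed_form (m : ℕ) (hm : 1 ≤ m) (s : ℝ) (hs : -(m : ℝ) < s) (Q : ℕ → ℝ)
    (hQm : Q m = (2 * m + s) / (2 * m + s + m * (m + s)))
    (hQ : ∀ k : ℕ, m + 1 ≤ k →
      Q k = (m * ((k : ℝ) - 1 + s) / (2 * m + s + m * (k + s))) * Q (k - 1)) :
    ∀ k : ℕ, m ≤ k →
      Q k = (2 * m + s) * Real.Gamma (m + s + 2 + s / m) * Real.Gamma (k + s) /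
        (m * Real.Gamma (m + s) * Real.Gamma (k + s + 3 + s / m)) := by
  have hm0 : (0 : ℝ) < m := by exact_mod_cast hm
  have hms : (0 : ℝ) < m + s := by linarith
  have hsm : -1 < s / m := by
    rw [lt_div_iff₀ hm0]; linarith
  have hΓms : 0 < Real.Gamma (m + s) := Real.Gamma_pos_of_pos hms
  have hΓa : 0 < Real.Gamma (m + s + 2 + s / m) := Real.Gamma_pos_of_pos (by linarith)
  intro k hk
  induction k, hk using Nat.le_induction with
  | base =>
    have h1 : (m : ℝ) + s + 3 + s / m = (m + s + 2 + s / m) + 1 := by ring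
    have hx : (0 : ℝ) < m + s + 2 + s / m := by linarith
    rw [hQm, h1, Real.Gamma_add_one hx.ne']
    have h2m : (0 : ℝ) < 2 * m + s + m * (m + s) := by nlinarith
    generalize Real.Gamma (↑m + s + 2 + s / ↑m) = A at hΓa ⊢
    generalize Real.Gamma (↑m + s) = B at hΓms ⊢
    rw [div_eq_div_iff h2m.ne' (mul_pos (mul_pos hm0 hΓms) (mul_pos hx hΓa)).ne']
    field_simp
    ring
  | succ k hk ih =>
    have hks : (0 : ℝ) < k + s := by
      have : (m : ℝ) ≤ k := by exact_mod_cast hk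
      linarith
    have hΓks : 0 < Real.Gamma (k + s) := Real.Gamma_pos_of_pos hks
    have hΓb : 0 < Real.Gamma (k + s + 3 + s / m) := Real.Gamma_pos_of_pos (by linarith)
    have hrec := hQ (k + 1) (by omega)
    rw [Nat.add_sub_cancel] at hrec
    push_cast at hrec ⊢
    rw [hrec, ih]
    have h1 : (k : ℝ) + 1 + s = (k + s) + 1 := by ring
    have h2 : (k : ℝ) + 1 + s + 3 + s / m = (k + s + 3 + s / m) + 1 := by ring
    have hden : (0 : ℝ) < 2 * m + s + m * (k + s + 1) := by nlinarith
    have hden2 : (0 : ℝ) < k + s + 3 + s / m := by linarith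
    rw [h2, h1, Real.Gamma_add_one hks.ne', Real.Gamma_add_one hden2.ne']
    generalize Real.Gamma (↑m + s + 2 + s / ↑m) = A at hΓa ⊢
    generalize Real.Gamma (↑m + s) = B at hΓms ⊢
    generalize Real.Gamma (↑k + s) = C at hΓks ⊢
    generalize Real.Gamma (↑k + s + 3 + s / ↑m) = D at hΓb ⊢
    rw [div_mul_div_comm, div_eq_div_iff (by positivity)
      (mul_pos (mul_pos hm0 hΓms) (mul_pos hden2 hΓb)).ne']
    field_simp
    ring
end

section
/- Let m ≥ 1 be a natural number and let s be a real number with s > -m. Then Σ_{k=m}^{∞} (2m+s)·Γ(m+s+2+s/m)·Γ(k+s) / (m·Γ(m+s)·Γ(k+s+3+s/m)) = 1, where Γ denotes the Gamma function; that is, the closed-form vertex degree distribution of the L-graph with parameters (m,s) is a probability distribution on {m, m+1, m+2, …}. -/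
/-!
With `g y = Γ(y) / Γ(y + c)`, the functional equation gives the telescoping identity
`g y - g (y + 1) = c · Γ(y) / Γ(y + c + 1)`, and `g y ≤ 1 / y` for `c ≥ 1` by monotonicity of `Γ`
on `[2, ∞)`, so `g (x + n) → 0`. Hence `∑ₙ Γ(x + n) / Γ(x + n + c + 1) = Γ(x) / (c · Γ(x + c))`.
For `x = m + s` and `c = 2 + s / m` the normalising constant of the degree distribution is exactly
the reciprocal of this sum, because `m · c = 2m + s`.
-/

open Filter Topology

namespace Real

lemma Gamma_div_Gamma_add_sub_Gamma_add_one_div {x c : ℝ} (hx : 0 < x) (hc : 0 < c) :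
    Gamma x / Gamma (x + c) - Gamma (x + 1) / Gamma (x + 1 + c) =
      c * (Gamma x / Gamma (x + c + 1)) := by
  have hGc : Gamma (x + c) ≠ 0 := by positivity
  rw [add_right_comm, Gamma_add_one hx.ne', Gamma_add_one (by positivity : x + c ≠ 0)]
  field_simp
  ring

lemma Gamma_div_Gamma_add_le_inv {y c : ℝ} (hy : 1 ≤ y) (hc : 1 ≤ c) :
    Gamma y / Gamma (y + c) ≤ y⁻¹ := by
  have hy0 : 0 < y := by linarith
  have hmono : Gamma (y + 1) ≤ Gamma (y + c) :=
    Gamma_strictMonoOn_Ici.monotoneOn (Set.mem_Ici.2 (by linarith))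
      (Set.mem_Ici.2 (by linarith)) (by linarith)
  calc Gamma y / Gamma (y + c) ≤ Gamma y / Gamma (y + 1) :=
        div_le_div_of_nonneg_left (by positivity) (Gamma_pos_of_pos (by linarith)) hmono
    _ = y⁻¹ := by
        rw [Gamma_add_one hy0.ne', div_mul_cancel_right₀ (Gamma_pos_of_pos hy0).ne']

lemma tendsto_Gamma_div_Gamma_add_atTop {c : ℝ} (hc : 1 ≤ c) :
    Tendsto (fun y => Gamma y / Gamma (y + c)) atTop (𝓝 0) := by
  refine squeeze_zero' ?_ ?_ tendsto_inv_atTop_zero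
  · filter_upwards [eventually_gt_atTop 0] with y hy
    exact div_nonneg (Gamma_pos_of_pos hy).le (Gamma_pos_of_pos (by linarith)).le
  · filter_upwards [eventually_ge_atTop 1] with y hy
    exact Gamma_div_Gamma_add_le_inv hy hc

lemma hasSum_Gamma_add_nat_div_Gamma_add_nat_add {x c : ℝ} (hx : 0 < x) (hc : 1 ≤ c) :
    HasSum (fun n : ℕ => Gamma (x + n) / Gamma (x + n + c + 1))
      (Gamma x / (c * Gamma (x + c))) := by
  set g : ℕ → ℝ := fun n => Gamma (x + n) / Gamma (x + n + c)
  have hc0 : 0 < c := by linarith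
  have hxn : ∀ n : ℕ, 0 < x + n := fun n => by positivity
  have hterm : ∀ n : ℕ, Gamma (x + n) / Gamma (x + n + c + 1) = c⁻¹ * (g n - g (n + 1)) := by
    intro n
    simp only [g, Nat.cast_succ, ← add_assoc]
    rw [Gamma_div_Gamma_add_sub_Gamma_add_one_div (hxn n) hc0, inv_mul_cancel_left₀ hc0.ne']
  have hg : Tendsto g atTop (𝓝 0) :=
    (tendsto_Gamma_div_Gamma_add_atTop hc).comp
      (tendsto_atTop_add_const_left _ x tendsto_natCast_atTop_atTop)
  have hpartial : Tendsto (fun n => ∑ i ∈ Finset.range n, c⁻¹ * (g i - g (i + 1))) atTop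
      (𝓝 (c⁻¹ * (g 0 - 0))) := by
    simp_rw [← Finset.mul_sum, Finset.sum_range_sub']
    exact (tendsto_const_nhds.sub hg).const_mul _
  have hlim : c⁻¹ * (g 0 - 0) = Gamma x / (c * Gamma (x + c)) := by
    simp only [g, Nat.cast_zero, add_zero, sub_zero]
    rw [mul_comm c, ← div_div, inv_mul_eq_div]
  rw [funext hterm, hasSum_iff_tendsto_nat_of_nonneg, ← hlim]
  · exact hpartial
  · intro n
    rw [← hterm]
    positivity

end Real

/-- The closed-form L-graph vertex degree distribution sums to 1 over
`k = m, m+1, m+2, …`. -/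
theorem L_vdd_closed_form_sums_to_one (m : ℕ) (hm : 1 ≤ m) (s : ℝ) (hs : -(m : ℝ) < s) :
    ∑' n : ℕ,
      (2 * m + s) * Real.Gamma (m + s + 2 + s / m) * Real.Gamma ((m + n : ℕ) + s) /
        (m * Real.Gamma (m + s) * Real.Gamma ((m + n : ℕ) + s + 3 + s / m)) = 1 := by
  have hm0 : (0 : ℝ) < m := by exact_mod_cast hm
  have hms : 0 < (m : ℝ) + s := by linarith
  have hc : 1 ≤ 2 + s / m := by
    have : -1 < s / m := by rw [lt_div_iff₀ hm0]; linarith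
    linarith
  have hsum := (Real.hasSum_Gamma_add_nat_div_Gamma_add_nat_add hms hc).mul_left
    ((2 * m + s) * Real.Gamma (m + s + 2 + s / m) / (m * Real.Gamma (m + s)))
  convert hsum.tsum_eq using 1
  · congr 1 with n
    push_cast
    rw [show (m : ℝ) + n + s + 3 + s / m = m + s + n + (2 + s / m) + 1 by ring,
      add_right_comm _ (n : ℝ)]
    ring
  · have h2ms : (2 * m + s : ℝ) ≠ 0 := by linarith
    have hG : Real.Gamma (m + s) ≠ 0 := (Real.Gamma_pos_of_pos hms).ne'
    have hG' : Real.Gamma (m + s + (2 + s / m)) ≠ 0 :=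
      (Real.Gamma_pos_of_pos (by linarith)).ne'
    rw [show (m : ℝ) + s + 2 + s / m = m + s + (2 + s / m) by ring]
    generalize Real.Gamma (m + s + (2 + s / m)) = G at hG' ⊢
    field_simp
end

section
/- Let m ≥ 1 be a natural number and let s be a real number with s > -m. Then Σ_{k=m}^{∞} k · (2m+s)·Γ(m+s+2+s/m)·Γ(k+s) / (m·Γ(m+s)·Γ(k+s+3+s/m)) = 2m; that is, the average vertex degree of the L-graph with parameters (m,s) equals 2m. -/
/-!
Put `x = m + s`, `c = 2 + s / m` and `d = -s`; up to a constant factor the summand is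
`(x + n + d) Γ(x + n) / Γ(x + n + c + 1)`. Since `Γ(y + 1) = y Γ(y)`, the forward difference of
`(p y + q) Γ(y) / Γ(y + c)` is `(p (c - 1) y + q c) Γ(y) / Γ(y + c + 1)`, so for
`p = 1 / (c - 1)`, `q = d / c` the series telescopes to the value at `y = x`, which works out to
`2m`. The tail vanishes because `c > 1`: Wendel's inequality `Γ(y + t) ≤ Γ(y) y ^ t` for
`0 ≤ t ≤ 1`, a consequence of the log-convexity of `Γ`, gives `y Γ(y) / Γ(y + c) ≤ (y + t) ^ (-t)`
with `t = min (c - 1) 1`.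
-/

open Filter Topology Set

theorem hasSum_sub_succ_of_antitone {u : ℕ → ℝ} (hu : Antitone u)
    (hlim : Tendsto u atTop (𝓝 0)) : HasSum (fun n => u n - u (n + 1)) (u 0) := by
  refine (hasSum_iff_tendsto_nat_of_nonneg (fun n => sub_nonneg.2 (hu n.le_succ)) _).2 ?_
  simp_rw [Finset.sum_range_sub']
  simpa using tendsto_const_nhds.sub hlim

namespace Real

theorem Gamma_add_le_Gamma_mul_rpow {x t : ℝ} (hx : 0 < x) (ht : t ∈ Icc (0 : ℝ) 1) :
    Gamma (x + t) ≤ Gamma x * x ^ t := by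
  obtain ⟨ht0, ht1⟩ := ht
  rcases ht0.eq_or_lt with rfl | ht0
  · simp
  rcases ht1.eq_or_lt with rfl | ht1
  · rw [Gamma_add_one hx.ne', rpow_one, mul_comm]
  have hconv := Gamma_mul_add_mul_le_rpow_Gamma_mul_rpow_Gamma (a := 1 - t) (b := t)
    hx (by linarith : 0 < x + 1) (by linarith) ht0 (by ring)
  have hΓ := Gamma_pos_of_pos hx
  calc Gamma (x + t) = Gamma ((1 - t) * x + t * (x + 1)) := by ring_nf
    _ ≤ Gamma x ^ (1 - t) * Gamma (x + 1) ^ t := hconv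
    _ = Gamma x * x ^ t := by
      rw [Gamma_add_one hx.ne', mul_rpow hx.le hΓ.le, ← mul_assoc, mul_right_comm, ← rpow_add hΓ,
        sub_add_cancel, rpow_one]

theorem tendsto_mul_Gamma_div_Gamma_add {c : ℝ} (hc : 1 < c) :
    Tendsto (fun x => x * Gamma x / Gamma (x + c)) atTop (𝓝 0) := by
  set t := min (c - 1) 1
  have ht0 : 0 < t := lt_min (by linarith) one_pos
  have htc : t ≤ c - 1 := min_le_left _ _
  have ht1 : t ≤ 1 := min_le_right _ _
  have hdecay : Tendsto (fun x => (x + t) ^ (-t)) atTop (𝓝 0) :=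
    (tendsto_rpow_neg_atTop ht0).comp (tendsto_atTop_add_const_right _ t tendsto_id)
  refine squeeze_zero' ?_ ?_ hdecay
  · filter_upwards [eventually_gt_atTop 0] with x hx
    have := Gamma_pos_of_pos (by linarith : 0 < x + c)
    positivity
  filter_upwards [eventually_ge_atTop 2] with x hx
  have hxt : 0 < x + t := by linarith
  have hΓxt := Gamma_pos_of_pos hxt
  have hnum : x * Gamma x ≤ Gamma (x + t) * (x + t) ^ (1 - t) := by
    rw [← Gamma_add_one (by linarith)]
    calc Gamma (x + 1) = Gamma (x + t + (1 - t)) := by ring_nf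
      _ ≤ _ := Gamma_add_le_Gamma_mul_rpow hxt ⟨by linarith, by linarith⟩
  have hden : (x + t) * Gamma (x + t) ≤ Gamma (x + c) := by
    rw [← Gamma_add_one hxt.ne']
    exact Gamma_strictMonoOn_Ici.monotoneOn (by simp; linarith) (by simp; linarith)
      (by linarith)
  calc x * Gamma x / Gamma (x + c)
      ≤ Gamma (x + t) * (x + t) ^ (1 - t) / ((x + t) * Gamma (x + t)) := by gcongr
    _ = (x + t) ^ (-t) := by
      rw [sub_eq_add_neg, rpow_add hxt, rpow_one]
      field_simp

theorem tendsto_affine_mul_Gamma_div_Gamma_add (p q : ℝ) {c : ℝ} (hc : 1 < c) :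
    Tendsto (fun x => (p * x + q) * Gamma x / Gamma (x + c)) atTop (𝓝 0) := by
  have hlim : Tendsto (fun x => (p + q * x⁻¹) * (x * Gamma x / Gamma (x + c))) atTop
      (𝓝 ((p + q * 0) * 0)) :=
    ((tendsto_inv_atTop_zero.const_mul q).const_add p).mul (tendsto_mul_Gamma_div_Gamma_add hc)
  rw [mul_zero] at hlim
  refine hlim.congr' ?_
  filter_upwards [eventually_ne_atTop 0] with x hx
  field_simp

theorem affine_mul_Gamma_div_Gamma_add_sub_succ (p q : ℝ) {x c : ℝ} (hx : 0 < x) (hc : 0 < c) :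
    (p * x + q) * Gamma x / Gamma (x + c) - (p * (x + 1) + q) * Gamma (x + 1) / Gamma (x + 1 + c)
      = (p * (c - 1) * x + q * c) * Gamma x / Gamma (x + c + 1) := by
  have hxc : 0 < x + c := by linarith
  have := (Gamma_pos_of_pos hxc).ne'
  rw [Gamma_add_one hx.ne', add_right_comm, Gamma_add_one hxc.ne']
  field_simp
  ring

theorem hasSum_add_mul_Gamma_div_Gamma_add {x c d : ℝ} (hx : 0 < x) (hc : 1 < c)
    (hxd : 0 ≤ x + d) :
    HasSum (fun n : ℕ => (x + n + d) * Gamma (x + n) / Gamma (x + n + c + 1))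
      ((x / (c - 1) + d / c) * Gamma x / Gamma (x + c)) := by
  set p := 1 / (c - 1)
  set q := d / c
  set u : ℕ → ℝ := fun n => (p * (x + n) + q) * Gamma (x + n) / Gamma (x + n + c)
  have hxn : ∀ n : ℕ, 0 < x + n := fun n => by positivity
  have hstep : ∀ n : ℕ, u n - u (n + 1) = (x + n + d) * Gamma (x + n) / Gamma (x + n + c + 1) := by
    intro n
    have := affine_mul_Gamma_div_Gamma_add_sub_succ p q (hxn n) (by linarith : 0 < c)
    simp only [u, Nat.cast_succ, ← add_assoc, this]
    have hp : p * (c - 1) = 1 := one_div_mul_cancel (by linarith)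
    have hq : q * c = d := div_mul_cancel₀ d (by linarith)
    rw [hp, hq, one_mul]
  have hterm : ∀ n : ℕ, 0 ≤ (x + n + d) * Gamma (x + n) / Gamma (x + n + c + 1) := by
    intro n
    have := Gamma_pos_of_pos (hxn n)
    have := Gamma_pos_of_pos (by linarith [hxn n] : 0 < x + n + c + 1)
    have : 0 ≤ x + n + d := by linarith [n.cast_nonneg (α := ℝ)]
    positivity
  have hu : Antitone u := antitone_nat_of_succ_le fun n => sub_nonneg.1 (hstep n ▸ hterm n)
  have hlim : Tendsto u atTop (𝓝 0) :=
    (tendsto_affine_mul_Gamma_div_Gamma_add p q hc).comp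
      (tendsto_atTop_add_const_left _ x tendsto_natCast_atTop_atTop)
  have := hasSum_sub_succ_of_antitone hu hlim
  simp only [hstep] at this
  convert this using 1
  simp only [u, p, q, Nat.cast_zero, add_zero]
  ring

end Real

open Real

/-- The closed-form L-graph vertex degree distribution has mean degree
`Σ_{k=m}^∞ k·Q_k = 2m`. -/
theorem L_vdd_closed_form_mean_degree (m : ℕ) (hm : 1 ≤ m) (s : ℝ) (hs : -(m : ℝ) < s) :
    ∑' n : ℕ,
      ((m + n : ℕ) : ℝ) *
        ((2 * m + s) * Real.Gamma (m + s + 2 + s / m) * Real.Gamma ((m + n : ℕ) + s) /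
          (m * Real.Gamma (m + s) * Real.Gamma ((m + n : ℕ) + s + 3 + s / m))) =
      2 * m := by
  have hm0 : (0 : ℝ) < m := by exact_mod_cast hm
  have hms : 0 < (m : ℝ) + s := by linarith
  have hc : 1 < 2 + s / m := by
    have : -1 < s / m := by rw [lt_div_iff₀ hm0]; linarith
    linarith
  have hsum := (hasSum_add_mul_Gamma_div_Gamma_add hms hc (d := -s) (by linarith)).mul_left
    ((2 * m + s) * Gamma (m + s + 2 + s / m) / (m * Gamma (m + s)))
  convert hsum.tsum_eq using 1
  · refine tsum_congr fun n => ?_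
    rw [show ((m + n : ℕ) : ℝ) + s + 3 + s / m = m + s + n + (2 + s / m) + 1 by push_cast; ring]
    push_cast
    ring_nf
  · have hΓ₁ := (Gamma_pos_of_pos hms).ne'
    have hΓ₂ := (Gamma_pos_of_pos (by linarith : 0 < (m : ℝ) + s + 2 + s / m)).ne'
    rw [← add_assoc]
    generalize Gamma (m + s + 2 + s / m) = G at hΓ₂ ⊢
    generalize Gamma (m + s) = G' at hΓ₁ ⊢
    have h2ms : 2 * (m : ℝ) + s ≠ 0 := by linarith
    have := hms.ne'
    rw [show 2 + s / m - 1 = (m + s) / m by field_simp; ring,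
      show 2 + s / m = (2 * m + s) / m by field_simp]
    field_simp
    ring
end

section
/- Let m ≥ 1 be a natural number and fix k ≥ m. Then, as the real parameter s tends to +∞, (2m+s)·Γ(m+s+2+s/m)·Γ(k+s) / (m·Γ(m+s)·Γ(k+s+3+s/m)) tends to (1/(1+m))·(m/(1+m))^{k-m}; that is, the closed-form vertex degree distribution of the L-graph with weight f(k)=k+s converges pointwise, as s → ∞, to the geometric distribution of the L-graph with weight f(k)=1. -/
/-!
Since `Γ(x + n) / Γ(x) = x (x + 1) ⋯ (x + n - 1)`, putting `x = m + s`, `y = m + s + 2 + s / m`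
and `n = k - m` turns the expression into the rational function
`(2m + s) / (m (y + n)) · ∏_{j < n} (x + j) / (y + j)` of `s`. As `y ∼ (m + 1) s / m`, each of the
`n` factors of the product tends to `m / (m + 1)` and the prefactor tends to `1 / (m + 1)`.
-/

open Filter Finset Topology

theorem Real.Gamma_add_nat_eq_mul_prod {x : ℝ} (hx : 0 < x) (n : ℕ) :
    Real.Gamma (x + n) = Real.Gamma x * ∏ j ∈ range n, (x + j) := by
  induction n with
  | zero => simp
  | succ n ih =>
    rw [Nat.cast_succ, ← add_assoc, Real.Gamma_add_one (by positivity), ih, prod_range_succ]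
    ring

theorem Real.Gamma_add_nat_mul_Gamma_div_eq_prod {x y : ℝ} (hx : 0 < x) (hy : 0 < y) (n : ℕ) :
    Real.Gamma (x + n) * Real.Gamma y / (Real.Gamma x * Real.Gamma (y + n)) =
      ∏ j ∈ range n, (x + j) / (y + j) := by
  have hΓx := (Real.Gamma_pos_of_pos hx).ne'
  have hΓy := (Real.Gamma_pos_of_pos hy).ne'
  have hprod : ∏ j ∈ range n, (y + j) ≠ 0 := prod_ne_zero_iff.2 fun j _ => by positivity
  rw [Real.Gamma_add_nat_eq_mul_prod hx, Real.Gamma_add_nat_eq_mul_prod hy, prod_div_distrib]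
  field_simp

theorem tendsto_affine_div_affine_atTop (a b c d : ℝ) (hc : c ≠ 0) :
    Tendsto (fun s : ℝ => (a * s + b) / (c * s + d)) atTop (𝓝 (a / c)) := by
  have hlim : Tendsto (fun s : ℝ => (a + b / s) / (c + d / s)) atTop (𝓝 ((a + 0) / (c + 0))) :=
    (tendsto_const_nhds.add (tendsto_const_nhds.div_atTop tendsto_id)).div
      (tendsto_const_nhds.add (tendsto_const_nhds.div_atTop tendsto_id)) (by simpa using hc)
  rw [add_zero, add_zero] at hlim
  refine hlim.congr' ?_
  filter_upwards [eventually_gt_atTop 0] with s hs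
  rw [← mul_div_mul_left _ _ hs.ne']
  congr 1 <;> field_simp

/-- As `s → ∞`, the closed-form L-graph VDD at a fixed degree `k ≥ m`
converges to the geometric distribution `(1/(1+m))·(m/(1+m))^(k-m)`. -/
theorem L_vdd_closed_form_tendsto_geometric (m : ℕ) (hm : 1 ≤ m) (k : ℕ) (hk : m ≤ k) :
    Tendsto
      (fun s : ℝ =>
        (2 * m + s) * Real.Gamma (m + s + 2 + s / m) * Real.Gamma (k + s) /
          (m * Real.Gamma (m + s) * Real.Gamma (k + s + 3 + s / m)))
      atTop
      (nhds ((1 / (1 + (m : ℝ))) * ((m : ℝ) / (1 + m)) ^ (k - m))) := by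
  set n := k - m
  have hk' : (k : ℝ) = m + n := by rw [Nat.cast_sub hk]; ring
  have hfactor : ∀ j ∈ range n, Tendsto (fun s : ℝ => (m + s + j) / (m + s + 2 + s / m + j))
      atTop (𝓝 ((m : ℝ) / (1 + m))) := fun j _ => by
    convert tendsto_affine_div_affine_atTop 1 (m + j) ((1 + m) / m) (m + 2 + j) (by positivity)
      using 2 with s
    · field_simp; ring
    · field_simp
  have hprefactor : Tendsto (fun s : ℝ => (2 * m + s) / (m * (m + s + 2 + s / m + n)))
      atTop (𝓝 (1 / (1 + (m : ℝ)))) := by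
    refine (tendsto_affine_div_affine_atTop 1 (2 * m) (1 + m) (m * (m + 2 + n)) (by positivity)
      ).congr fun s => ?_
    congr 1
    · ring
    · field_simp; ring
  rw [show ((m : ℝ) / (1 + m)) ^ n = ∏ _j ∈ range n, (m : ℝ) / (1 + m) by
    rw [prod_const, card_range]]
  refine (hprefactor.mul (tendsto_finsetProd _ hfactor)).congr' ?_
  filter_upwards [eventually_gt_atTop 0] with s hs
  have hx : (0 : ℝ) < m + s := by positivity
  have hy : (0 : ℝ) < m + s + 2 + s / m := by positivity
  rw [hk', show (m + n + s : ℝ) = m + s + n by ring,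
    show (m + s + n + 3 + s / m : ℝ) = (m + s + 2 + s / m + n) + 1 by ring,
    Real.Gamma_add_one (by positivity), ← Real.Gamma_add_nat_mul_Gamma_div_eq_prod hx hy]
  have hΓx := (Real.Gamma_pos_of_pos hx).ne'
  have hΓyn := (Real.Gamma_pos_of_pos (add_pos_of_pos_of_nonneg hy n.cast_nonneg)).ne'
  field_simp
end
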